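/- Let ((A_p)_{p∈G}, (Δ_{p,q}), ε, (S_p)) be a finite-type Hopf G-coalgebra over a field k. Let p, q ∈ G, f ∈ (A_p)*, g ∈ (A_q)*, a ∈ A_{q⁻¹p⁻¹} and x ∈ A_{pq}. Write Δ_{q⁻¹,p⁻¹}(a) = Σ_{(a)} a_(1) ⊗ a_(2) (with a_(1) ∈ A_{q⁻¹}, a_(2) ∈ A_{p⁻¹}) and Δ_{p,q}(x) = Σ_{(x)} x_(1) ⊗ x_(2). Then (f ⊗ g)(Δ_{p,q}(x · S_{q⁻¹p⁻¹}(a))) = Σ_{(a)} Σ_{(x)} f(x_(1) · S_{p⁻¹}(a_(2))) · g(x_(2) · S_{q⁻¹}(a_(1))). -/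

import Mathlib

open TensorProduct

universe u v w

variable (k : Type u) [Field k] {G : Type v} [Group G]

/-- Transport of elements along an equality of indices. -/
def castL (A : G → Type w) [∀ p, Ring (A p)] [∀ p, Algebra k (A p)]
    {p q : G} (h : p = q) : A p →ₗ[k] A q := by subst h; exact LinearMap.id

/-- A (finite-type) Hopf `G`-coalgebra: a family of unital `k`-algebras `(A p)`,
comultiplications `Δ p q : A (p*q) → A p ⊗ A q` which are unital algebra maps and
coassociative, a counit `ε : A 1 → k`, and antipode maps `S p : A p → A p⁻¹`. -/
structure HopfGCoalgebra (A : G → Type w) [∀ p, Ring (A p)] [∀ p, Algebra k (A p)] where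
  Δ : ∀ p q : G, A (p * q) →ₐ[k] (A p ⊗[k] A q)
  coassoc : ∀ (p q r : G) (a : A (p * q * r)),
    (Algebra.TensorProduct.assoc k k k (A p) (A q) (A r))
        ((Algebra.TensorProduct.map (Δ p q) (AlgHom.id k (A r))) ((Δ (p * q) r) a))
      = (Algebra.TensorProduct.map (AlgHom.id k (A p)) (Δ q r))
          ((Δ p (q * r)) (castL k A (mul_assoc p q r) a))
  ε : A (1 : G) →ₐ[k] k
  counit_right : ∀ (p : G) (a : A (p * 1)),
    (TensorProduct.rid k (A p))
        (TensorProduct.map LinearMap.id ε.toLinearMap ((Δ p 1) a))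
      = castL k A (mul_one p) a
  counit_left : ∀ (p : G) (a : A (1 * p)),
    (TensorProduct.lid k (A p))
        (TensorProduct.map ε.toLinearMap LinearMap.id ((Δ 1 p) a))
      = castL k A (one_mul p) a
  S : ∀ p : G, A p →ₗ[k] A p⁻¹
  antipode_left : ∀ (p : G) (a : A (p⁻¹ * p)),
    LinearMap.mul' k (A p)
        (TensorProduct.map ((castL k A (inv_inv p)).comp (S p⁻¹)) LinearMap.id
          ((Δ p⁻¹ p) a))
      = ε (castL k A (inv_mul_cancel p) a) • 1
  antipode_right : ∀ (p : G) (a : A (p * p⁻¹)),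
    LinearMap.mul' k (A p)
        (TensorProduct.map LinearMap.id ((castL k A (inv_inv p)).comp (S p⁻¹))
          ((Δ p p⁻¹) a))
      = ε (castL k A (mul_inv_cancel p) a) • 1

/-- A left integral on a Hopf `G`-coalgebra: a family of functionals `φ p : A p → k`
with `(id ⊗ φ q)(Δ p q a) = φ (pq) a • 1` in `A p`. -/
def HopfGCoalgebra.IsLeftIntegral
    {k : Type u} [Field k] {G : Type v} [Group G]
    {A : G → Type w} [∀ p, Ring (A p)] [∀ p, Algebra k (A p)]
    (H : HopfGCoalgebra k A) (φ : ∀ p : G, A p →ₗ[k] k) : Prop :=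
  ∀ (p q : G) (a : A (p * q)),
    (TensorProduct.rid k (A p))
        (TensorProduct.map LinearMap.id (φ q) ((H.Δ p q) a))
      = φ (p * q) a • 1

/-- The pairing `f·g := (f ⊗ g) ∘ Δ_{p,q}` of linear functionals on the components
of a Hopf `G`-coalgebra. -/
noncomputable def HopfGCoalgebra.dmul
    {k : Type u} [Field k] {G : Type v} [Group G]
    {A : G → Type w} [∀ p, Ring (A p)] [∀ p, Algebra k (A p)]
    (H : HopfGCoalgebra k A) {p q : G}
    (f : A p →ₗ[k] k) (g : A q →ₗ[k] k) : A (p * q) →ₗ[k] k :=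
  LinearMap.mul' k k ∘ₗ TensorProduct.map f g ∘ₗ (H.Δ p q).toLinearMap

/-- For `f ∈ (A e)*`, the functional `φ_f^p : A p → k` given by
`φ_f^p(a) = Tr (x ↦ ((id ⊗ f) ∘ Δ_{p,e}) (a · S_{p⁻¹}(S_p x)))`. -/
noncomputable def HopfGCoalgebra.phi
    {k : Type u} [Field k] {G : Type v} [Group G]
    {A : G → Type w} [∀ p, Ring (A p)] [∀ p, Algebra k (A p)]
    (H : HopfGCoalgebra k A) (f : A (1 : G) →ₗ[k] k) (p : G) : A p →ₗ[k] k :=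
  (LinearMap.trace k (A p)) ∘ₗ
    (LinearMap.llcomp k (A p) (A p) (A p)
        ((TensorProduct.rid k (A p)).toLinearMap ∘ₗ
          TensorProduct.map LinearMap.id f ∘ₗ
          (H.Δ p 1).toLinearMap ∘ₗ castL k A (mul_one p).symm)) ∘ₗ
    (LinearMap.lcomp k (A p) (castL k A (inv_inv p) ∘ₗ (H.S p⁻¹) ∘ₗ H.S p)) ∘ₗ
    (LinearMap.mul k (A p))

section Aux
namespace HopfGCoalgebra
open TensorProduct

variable {k : Type u} [Field k] {G : Type v} [Group G]
  {A : G → Type w} [∀ p, Ring (A p)] [∀ p, Algebra k (A p)]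

lemma castL_rfl {p : G} (h : p = p) : castL k A h = LinearMap.id := rfl

lemma castL_castL {p q r : G} (h : p = q) (h' : q = r) (a : A p) :
    castL k A h' (castL k A h a) = castL k A (h.trans h') a := by subst h h'; rfl

lemma castL_irrel {p q : G} (h h' : p = q) (a : A p) :
    castL k A h a = castL k A h' a := rfl

variable (H : HopfGCoalgebra k A)

lemma Δ_castL {u u' v v' : G} (hu : u' = u) (hv : v' = v)
    (h : u' * v' = u * v) (a : A (u' * v')) :
    H.Δ u v (castL k A h a)
      = TensorProduct.map (castL k A hu) (castL k A hv) (H.Δ u' v' a) := by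
  subst hu hv; simp [castL_rfl]

lemma S_castL {u u' : G} (h : u' = u) (h' : u'⁻¹ = u⁻¹) (a : A u') :
    H.S u (castL k A h a) = castL k A h' (H.S u' a) := by subst h; rfl

lemma coassocL (p q r : G) (a : A (p * q * r)) :
    (TensorProduct.assoc k (A p) (A q) (A r))
        (TensorProduct.map (H.Δ p q).toLinearMap LinearMap.id ((H.Δ (p * q) r) a))
      = TensorProduct.map LinearMap.id (H.Δ q r).toLinearMap
          ((H.Δ p (q * r)) (castL k A (mul_assoc p q r) a)) :=
  H.coassoc p q r a

lemma antipode_left' (u : G) {v : G} (hv : v = u⁻¹) (h : v⁻¹ = u) (a : A (v * u)) :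
    LinearMap.mul' k (A u)
        (TensorProduct.map ((castL k A h).comp (H.S v)) LinearMap.id
          ((H.Δ v u) a))
      = H.ε (castL k A (by rw [hv, inv_mul_cancel]) a) • 1 := by
  subst hv; exact H.antipode_left u a

lemma counit_right' (u : G) {v : G} (hv : v = 1) (h : u * v = u) (a : A (u * v)) :
    (TensorProduct.rid k (A u))
        (TensorProduct.map LinearMap.id (H.ε.toLinearMap ∘ₗ castL k A hv) ((H.Δ u v) a))
      = castL k A h a := by
  subst hv; exact H.counit_right u a

end HopfGCoalgebra
end Aux
set_option linter.unusedSectionVars false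

section Aux2
namespace HopfGCoalgebra
open TensorProduct

variable {k : Type u} [Field k] {G : Type v} [Group G]
  {A : G → Type w} [∀ p, Ring (A p)] [∀ p, Algebra k (A p)]
  {B : Type*} [Ring B] [Algebra k B]

variable (H : HopfGCoalgebra k A)

/-- Convolution of linear maps into an algebra `B`. -/
noncomputable def cnv {u v : G} (F : A u →ₗ[k] B) (F' : A v →ₗ[k] B) :
    A (u * v) →ₗ[k] B :=
  LinearMap.mul' k B ∘ₗ TensorProduct.map F F' ∘ₗ (H.Δ u v).toLinearMap

lemma cnv_apply {u v : G} (F : A u →ₗ[k] B) (F' : A v →ₗ[k] B) (a : A (u * v)) :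
    cnv H F F' a = LinearMap.mul' k B (TensorProduct.map F F' ((H.Δ u v) a)) := rfl

/-- The unit of convolution. -/
noncomputable def unitF : A (1 : G) →ₗ[k] B :=
  Algebra.linearMap k B ∘ₗ H.ε.toLinearMap

lemma unitF_apply (a : A (1 : G)) : (unitF H (B := B)) a = H.ε a • 1 := by
  simp [unitF, Algebra.smul_def]

lemma cnv_unit_left {v : G} (F : A v →ₗ[k] B) (a : A ((1 : G) * v)) :
    cnv H (unitF H) F a = F (castL k A (one_mul v) a) := by
  have key : ∀ t : A (1 : G) ⊗[k] A v,
      LinearMap.mul' k B (TensorProduct.map (unitF H (B := B)) F t)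
        = F ((TensorProduct.lid k (A v))
            (TensorProduct.map H.ε.toLinearMap LinearMap.id t)) := by
    intro t
    induction t using TensorProduct.induction_on with
    | zero => simp
    | tmul x y =>
        simp only [TensorProduct.map_tmul, LinearMap.mul'_apply,
          TensorProduct.lid_tmul, LinearMap.map_smul, LinearMap.id_coe, id_eq,
          unitF, LinearMap.comp_apply, Algebra.linearMap_apply,
          AlgHom.toLinearMap_apply]
        rw [Algebra.smul_def]
    | add s t hs ht => simp [map_add, hs, ht]
  rw [cnv_apply, key]
  congr 1
  exact H.counit_left v a

lemma cnv_unit_right {v : G} (F : A v →ₗ[k] B) (a : A (v * (1 : G))) :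
    cnv H F (unitF H) a = F (castL k A (mul_one v) a) := by
  have key : ∀ t : A v ⊗[k] A (1 : G),
      LinearMap.mul' k B (TensorProduct.map F (unitF H (B := B)) t)
        = F ((TensorProduct.rid k (A v))
            (TensorProduct.map LinearMap.id H.ε.toLinearMap t)) := by
    intro t
    induction t using TensorProduct.induction_on with
    | zero => simp
    | tmul x y =>
        simp only [TensorProduct.map_tmul, LinearMap.mul'_apply,
          TensorProduct.rid_tmul, LinearMap.map_smul, LinearMap.id_coe, id_eq,
          unitF, LinearMap.comp_apply, Algebra.linearMap_apply,
          AlgHom.toLinearMap_apply]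
        rw [Algebra.smul_def, ← Algebra.commutes]
    | add s t hs ht => simp [map_add, hs, ht]
  rw [cnv_apply, key]
  congr 1
  exact H.counit_right v a

lemma cnv_cast_left {u u' v : G} (F : A u →ₗ[k] B) (F' : A v →ₗ[k] B)
    (h : u' = u) (h2 : u' * v = u * v) (a : A (u' * v)) :
    cnv H (F ∘ₗ castL k A h) F' a = cnv H F F' (castL k A h2 a) := by
  subst h; rfl

lemma cnv_cast_right {u v v' : G} (F : A u →ₗ[k] B) (F' : A v →ₗ[k] B)
    (h : v' = v) (h2 : u * v' = u * v) (a : A (u * v')) :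
    cnv H F (F' ∘ₗ castL k A h) a = cnv H F F' (castL k A h2 a) := by
  subst h; rfl

lemma cnv_assoc {u v w' : G} (F : A u →ₗ[k] B) (F' : A v →ₗ[k] B)
    (F'' : A w' →ₗ[k] B) (a : A (u * v * w')) :
    cnv H (cnv H F F') F'' a
      = cnv H F (cnv H F' F'') (castL k A (mul_assoc u v w') a) := by
  have key : (LinearMap.mul' k B ∘ₗ
        TensorProduct.map (LinearMap.mul' k B ∘ₗ TensorProduct.map F F') F'')
      = (LinearMap.mul' k B ∘ₗ
          TensorProduct.map F (LinearMap.mul' k B ∘ₗ TensorProduct.map F' F''))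
        ∘ₗ (TensorProduct.assoc k (A u) (A v) (A w')).toLinearMap := by
    apply TensorProduct.ext_threefold
    intro x y z
    simp [mul_assoc]
  have e1 : cnv H (cnv H F F') F'' a
      = (LinearMap.mul' k B ∘ₗ
          TensorProduct.map (LinearMap.mul' k B ∘ₗ TensorProduct.map F F') F'')
        (TensorProduct.map (H.Δ u v).toLinearMap LinearMap.id
            ((H.Δ (u * v) w') a)) := by
    have m1 : TensorProduct.map (H.cnv F F' (B := B)) F''
        = TensorProduct.map (LinearMap.mul' k B ∘ₗ TensorProduct.map F F') F''
          ∘ₗ TensorProduct.map (H.Δ u v).toLinearMap LinearMap.id := by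
      rw [← TensorProduct.map_comp, LinearMap.comp_id]; rfl
    rw [cnv_apply, m1]; rfl
  have e2 : cnv H F (cnv H F' F'') (castL k A (mul_assoc u v w') a)
      = (LinearMap.mul' k B ∘ₗ
          TensorProduct.map F (LinearMap.mul' k B ∘ₗ TensorProduct.map F' F''))
        (TensorProduct.map LinearMap.id (H.Δ v w').toLinearMap
            ((H.Δ u (v * w')) (castL k A (mul_assoc u v w') a))) := by
    have m2 : TensorProduct.map F (H.cnv F' F'' (B := B))
        = TensorProduct.map F (LinearMap.mul' k B ∘ₗ TensorProduct.map F' F'')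
          ∘ₗ TensorProduct.map LinearMap.id (H.Δ v w').toLinearMap := by
      rw [← TensorProduct.map_comp, LinearMap.comp_id]; rfl
    rw [cnv_apply, m2]; rfl
  rw [e1, e2, key, ← H.coassocL u v w' a]
  rfl

end HopfGCoalgebra
end Aux2
section Aux3
set_option maxHeartbeats 1000000
set_option synthInstance.maxHeartbeats 400000
namespace HopfGCoalgebra
open TensorProduct

variable {k : Type u} [Field k] {G : Type v} [Group G]
  {A : G → Type w} [∀ p, Ring (A p)] [∀ p, Algebra k (A p)]

variable (H : HopfGCoalgebra k A)

/-- The antipode `A p⁻¹ → A p`. -/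
noncomputable def cS (p : G) : A p⁻¹ →ₗ[k] A p :=
  castL k A (inv_inv p) ∘ₗ H.S p⁻¹

/-- `Δ ∘ S` on `A (q⁻¹ p⁻¹)`. -/
noncomputable def T1 (p q : G) : A (q⁻¹ * p⁻¹) →ₗ[k] (A p ⊗[k] A q) :=
  (H.Δ p q).toLinearMap ∘ₗ
    castL k A (by rw [mul_inv_rev, inv_inv, inv_inv]) ∘ₗ H.S (q⁻¹ * p⁻¹)

/-- `(S ⊗ S) ∘ τ ∘ Δ` on `A (q⁻¹ p⁻¹)`. -/
noncomputable def T2 (p q : G) : A (q⁻¹ * p⁻¹) →ₗ[k] (A p ⊗[k] A q) :=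
  (TensorProduct.map (cS H p) (cS H q) ∘ₗ
    (TensorProduct.comm k (A q⁻¹) (A p⁻¹)).toLinearMap) ∘ₗ
    (H.Δ q⁻¹ p⁻¹).toLinearMap

lemma mulΔ (p q : G) :
    LinearMap.mul' k (A p ⊗[k] A q) ∘ₗ
      TensorProduct.map (H.Δ p q).toLinearMap (H.Δ p q).toLinearMap
      = (H.Δ p q).toLinearMap ∘ₗ LinearMap.mul' k (A (p * q)) := by
  apply TensorProduct.ext'
  intro x y
  simp [map_mul]

lemma stepA (p q : G) (h1 : (q⁻¹ * p⁻¹) * (p * q) = 1)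
    (a : A ((q⁻¹ * p⁻¹) * (p * q))) :
    cnv H (T1 H p q) (H.Δ p q).toLinearMap a = unitF H (castL k A h1 a) := by
  have hpf : (q⁻¹ * p⁻¹)⁻¹ = p * q := by rw [mul_inv_rev, inv_inv, inv_inv]
  have split : TensorProduct.map (T1 H p q) (H.Δ p q).toLinearMap
      = TensorProduct.map (H.Δ p q).toLinearMap (H.Δ p q).toLinearMap ∘ₗ
        TensorProduct.map ((castL k A hpf).comp (H.S (q⁻¹ * p⁻¹))) LinearMap.id := by
    rw [← TensorProduct.map_comp, LinearMap.comp_id]; rfl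
  rw [cnv_apply, split, LinearMap.comp_apply,
    ← LinearMap.comp_apply (LinearMap.mul' k _), mulΔ, LinearMap.comp_apply,
    H.antipode_left' (p * q) (by rw [mul_inv_rev]) hpf a]
  rw [map_smul, unitF_apply]
  have h1' : (H.Δ p q).toLinearMap (1 : A (p * q)) = 1 := map_one (H.Δ p q)
  rw [h1']

/-- swap-the-last-two-factors map. -/
noncomputable def swz (M N P : Type*) [AddCommMonoid M] [AddCommMonoid N]
    [AddCommMonoid P] [Module k M] [Module k N] [Module k P] :
    ((M ⊗[k] N) ⊗[k] P) →ₗ[k] ((M ⊗[k] P) ⊗[k] N) :=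
  (TensorProduct.assoc k M P N).symm.toLinearMap ∘ₗ
  TensorProduct.map LinearMap.id (TensorProduct.comm k N P).toLinearMap ∘ₗ
  (TensorProduct.assoc k M N P).toLinearMap

@[simp] lemma swz_tmul {M N P : Type*} [AddCommMonoid M] [AddCommMonoid N]
    [AddCommMonoid P] [Module k M] [Module k N] [Module k P]
    (x : M) (y : N) (z : P) :
    swz (k := k) M N P ((x ⊗ₜ y) ⊗ₜ z) = (x ⊗ₜ z) ⊗ₜ y := by
  simp [swz]

/-- half-multiplication with antipode: `x ⊗ z ↦ x * S z`. -/
noncomputable def Mm (p : G) : (A p ⊗[k] A p⁻¹) →ₗ[k] A p :=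
  LinearMap.mul' k (A p) ∘ₗ TensorProduct.map LinearMap.id (cS H p)

@[simp] lemma Mm_tmul (p : G) (x : A p) (z : A p⁻¹) :
    Mm H p (x ⊗ₜ z) = x * cS H p z := by
  simp [Mm]

/-- the 4-fold contraction `((x₁ ⊗ x₂) ⊗ y) ⊗ z ↦ (x₁ S z) ⊗ (x₂ S y)`. -/
noncomputable def Θm (p q : G) :
    (((A p ⊗[k] A q) ⊗[k] A q⁻¹) ⊗[k] A p⁻¹) →ₗ[k] (A p ⊗[k] A q) :=
  TensorProduct.map (Mm H p) (Mm H q) ∘ₗ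
  (TensorProduct.tensorTensorTensorComm k (A p) (A q) (A p⁻¹) (A q⁻¹)).toLinearMap ∘ₗ
  TensorProduct.map LinearMap.id (TensorProduct.comm k (A q⁻¹) (A p⁻¹)).toLinearMap ∘ₗ
  (TensorProduct.assoc k (A p ⊗[k] A q) (A q⁻¹) (A p⁻¹)).toLinearMap

@[simp] lemma Θm_tmul (p q : G) (x₁ : A p) (x₂ : A q) (y : A q⁻¹) (z : A p⁻¹) :
    Θm H p q (((x₁ ⊗ₜ x₂) ⊗ₜ y) ⊗ₜ z) = (x₁ * cS H p z) ⊗ₜ (x₂ * cS H q y) := by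
  simp [Θm]

/-- The map `W = (S ⊗ S) ∘ τ`. -/
noncomputable def Wm (p q : G) : (A q⁻¹ ⊗[k] A p⁻¹) →ₗ[k] (A p ⊗[k] A q) :=
  TensorProduct.map (cS H p) (cS H q) ∘ₗ
    (TensorProduct.comm k (A q⁻¹) (A p⁻¹)).toLinearMap

@[simp] lemma Wm_tmul (p q : G) (y : A q⁻¹) (z : A p⁻¹) :
    Wm H p q (y ⊗ₜ z) = cS H p z ⊗ₜ cS H q y := by
  simp [Wm]

lemma C1map (p q : G) :
    LinearMap.mul' k (A p ⊗[k] A q) ∘ₗ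
        TensorProduct.map (H.Δ p q).toLinearMap (Wm H p q) ∘ₗ
        (TensorProduct.assoc k (A (p * q)) (A q⁻¹) (A p⁻¹)).toLinearMap ∘ₗ
        TensorProduct.map (H.Δ (p * q) q⁻¹).toLinearMap LinearMap.id
      = Θm H p q ∘ₗ
        TensorProduct.map
          (TensorProduct.map (H.Δ p q).toLinearMap LinearMap.id ∘ₗ
            (H.Δ (p * q) q⁻¹).toLinearMap)
          LinearMap.id := by
  apply TensorProduct.ext'
  intro m z
  simp only [LinearMap.comp_apply, TensorProduct.map_tmul, LinearMap.id_coe, id_eq,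
    AlgHom.toLinearMap_apply, LinearEquiv.coe_coe]
  generalize (H.Δ (p * q) q⁻¹) m = t
  induction t using TensorProduct.induction_on with
  | zero => simp only [zero_tmul, map_zero]
  | tmul x y =>
    simp only [TensorProduct.assoc_tmul, TensorProduct.map_tmul,
      LinearMap.id_coe, id_eq, Wm_tmul, AlgHom.toLinearMap_apply]
    generalize (H.Δ p q) x = t2
    induction t2 using TensorProduct.induction_on with
    | zero => simp only [zero_tmul, map_zero]
    | tmul x₁ x₂ =>
      simp [Algebra.TensorProduct.tmul_mul_tmul]
    | add s t hs ht =>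
      simp only [add_tmul, map_add, hs, ht]
  | add s t hs ht =>
    simp only [add_tmul, map_add, hs, ht]
end HopfGCoalgebra
end Aux3
section Aux4
set_option maxHeartbeats 1000000
set_option synthInstance.maxHeartbeats 400000
namespace HopfGCoalgebra
open TensorProduct

variable {k : Type u} [Field k] {G : Type v} [Group G]
  {A : G → Type w} [∀ p, Ring (A p)] [∀ p, Algebra k (A p)]

variable (H : HopfGCoalgebra k A)

lemma C3map (p q : G) :
    Θm H p q ∘ₗ
        TensorProduct.map (TensorProduct.assoc k (A p) (A q) (A q⁻¹)).symm.toLinearMap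
          LinearMap.id
      = TensorProduct.map (Mm H p) (Mm H q) ∘ₗ
          swz (k := k) (A p) (A q ⊗[k] A q⁻¹) (A p⁻¹) := by
  apply TensorProduct.ext_threefold
  intro x₁ t z
  simp only [LinearMap.comp_apply, TensorProduct.map_tmul, LinearMap.id_coe, id_eq,
    LinearEquiv.coe_coe, swz_tmul]
  induction t using TensorProduct.induction_on with
  | zero => simp
  | tmul x₂ y => simp [TensorProduct.assoc_symm_tmul]
  | add s t hs ht =>
    simp only [tmul_add, add_tmul, map_add, hs, ht]

lemma swz_nat {M N N' P : Type*} [AddCommMonoid M] [AddCommMonoid N]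
    [AddCommMonoid N'] [AddCommMonoid P] [Module k M] [Module k N] [Module k N']
    [Module k P] (f : N →ₗ[k] N') :
    swz (k := k) M N' P ∘ₗ TensorProduct.map (TensorProduct.map LinearMap.id f) LinearMap.id
      = TensorProduct.map LinearMap.id f ∘ₗ swz (k := k) M N P := by
  apply TensorProduct.ext_threefold
  intro x t z
  simp

/-- `ε`-collapse of `Mm ∘ Δ`. -/
noncomputable def Em (q : G) : A (q * q⁻¹) →ₗ[k] A q :=
  LinearMap.toSpanSingleton k (A q) 1 ∘ₗ H.ε.toLinearMap ∘ₗ castL k A (mul_inv_cancel q)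

lemma Em_apply (q : G) (m : A (q * q⁻¹)) :
    Em H q m = H.ε (castL k A (mul_inv_cancel q) m) • 1 := rfl

lemma Mm_Δ (q : G) : Mm H q ∘ₗ (H.Δ q q⁻¹).toLinearMap = Em H q := by
  apply LinearMap.ext; intro m
  simpa [Mm, cS, Em_apply] using H.antipode_right q m

lemma C4map (p q : G) :
    TensorProduct.map (Mm H p) (Em H q) ∘ₗ
        swz (k := k) (A p) (A (q * q⁻¹)) (A p⁻¹) ∘ₗ
        TensorProduct.map
          ((H.Δ p (q * q⁻¹)).toLinearMap ∘ₗ castL k A (mul_assoc p q q⁻¹))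
          LinearMap.id
      = (TensorProduct.mk k (A p) (A q)).flip 1 ∘ₗ LinearMap.mul' k (A p) ∘ₗ
          TensorProduct.map (castL k A (mul_inv_cancel_right p q)) (cS H p) := by
  apply TensorProduct.ext'
  intro c z
  simp only [LinearMap.comp_apply, TensorProduct.map_tmul, LinearMap.id_coe, id_eq,
    AlgHom.toLinearMap_apply, LinearMap.flip_apply, TensorProduct.mk_apply,
    LinearMap.mul'_apply]
  have key : ∀ t : A p ⊗[k] A (q * q⁻¹),
      TensorProduct.map (Mm H p) (Em H q)
          (swz (k := k) (A p) (A (q * q⁻¹)) (A p⁻¹) (t ⊗ₜ[k] z))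
        = ((TensorProduct.rid k (A p))
            (TensorProduct.map LinearMap.id
              (H.ε.toLinearMap ∘ₗ castL k A (mul_inv_cancel q)) t) * cS H p z)
          ⊗ₜ[k] (1 : A q) := by
    intro t
    induction t using TensorProduct.induction_on with
    | zero => simp
    | tmul x₁ m =>
      simp only [swz_tmul, TensorProduct.map_tmul, Mm_tmul, Em_apply,
        LinearMap.comp_apply, LinearMap.id_coe, id_eq, TensorProduct.rid_tmul,
        AlgHom.toLinearMap_apply, tmul_smul, smul_mul_assoc, TensorProduct.smul_tmul']
    | add s t hs ht =>
      simp only [add_tmul, map_add, hs, ht, add_mul]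
  rw [key, H.counit_right' p (mul_inv_cancel q)
      (by rw [mul_inv_cancel, mul_one]) (castL k A (mul_assoc p q q⁻¹) c),
    castL_castL]

lemma Δ_castL_left {u u' v : G} (hu : u' = u) (h : u' * v = u * v) (b : A (u' * v)) :
    TensorProduct.map (castL k A hu) LinearMap.id ((H.Δ u' v) b)
      = H.Δ u v (castL k A h b) := by
  subst hu; simp [castL_rfl]

lemma stepB (p q : G) (hB : (p * q) * (q⁻¹ * p⁻¹) = 1)
    (a : A ((p * q) * (q⁻¹ * p⁻¹))) :
    cnv H (H.Δ p q).toLinearMap (T2 H p q) a = unitF H (castL k A hB a) := by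
  have hb : (p * q) * (q⁻¹ * p⁻¹) = p * q * q⁻¹ * p⁻¹ := (mul_assoc (p*q) q⁻¹ p⁻¹).symm
  set b : A (p * q * q⁻¹ * p⁻¹) := castL k A hb a with hbdef
  have hab : castL k A (mul_assoc (p*q) q⁻¹ p⁻¹) b = a := by
    rw [hbdef, castL_castL]; rfl
  set t₀ : A (p * q * q⁻¹) ⊗[k] A p⁻¹ := (H.Δ (p*q*q⁻¹) p⁻¹) b with ht₀
  have e1 : cnv H (H.Δ p q).toLinearMap (T2 H p q) a
      = LinearMap.mul' k (A p ⊗[k] A q)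
          (TensorProduct.map (H.Δ p q).toLinearMap (Wm H p q)
            (TensorProduct.map LinearMap.id (H.Δ q⁻¹ p⁻¹).toLinearMap
              ((H.Δ (p*q) (q⁻¹*p⁻¹)) a))) := by
    rw [cnv_apply]
    congr 1
    rw [← LinearMap.comp_apply (TensorProduct.map _ (Wm H p q)),
      ← TensorProduct.map_comp, LinearMap.comp_id]
    rfl
  have e2 : TensorProduct.map LinearMap.id (H.Δ q⁻¹ p⁻¹).toLinearMap
        ((H.Δ (p*q) (q⁻¹*p⁻¹)) a)
      = (TensorProduct.assoc k (A (p*q)) (A q⁻¹) (A p⁻¹))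
          (TensorProduct.map (H.Δ (p*q) q⁻¹).toLinearMap LinearMap.id t₀) := by
    rw [← hab, ht₀]
    exact (H.coassocL (p*q) q⁻¹ p⁻¹ b).symm
  have e3 := LinearMap.congr_fun (C1map H p q) t₀
  simp only [LinearMap.comp_apply, LinearEquiv.coe_coe] at e3
  rw [e1, e2, e3]
  -- now rewrite the inner comultiplication composite by coassociativity
  have hco : TensorProduct.map (H.Δ p q).toLinearMap LinearMap.id ∘ₗ
        (H.Δ (p*q) q⁻¹).toLinearMap
      = (TensorProduct.assoc k (A p) (A q) (A q⁻¹)).symm.toLinearMap ∘ₗ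
          TensorProduct.map LinearMap.id (H.Δ q q⁻¹).toLinearMap ∘ₗ
          (H.Δ p (q*q⁻¹)).toLinearMap ∘ₗ castL k A (mul_assoc p q q⁻¹) := by
    apply LinearMap.ext; intro c
    simp only [LinearMap.comp_apply, LinearEquiv.coe_coe, AlgHom.toLinearMap_apply]
    rw [LinearEquiv.eq_symm_apply]
    exact H.coassocL p q q⁻¹ c
  rw [hco]
  -- reorganize into the C3map/C4map composites
  have e4 : TensorProduct.map
        ((TensorProduct.assoc k (A p) (A q) (A q⁻¹)).symm.toLinearMap ∘ₗ
          TensorProduct.map LinearMap.id (H.Δ q q⁻¹).toLinearMap ∘ₗ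
          (H.Δ p (q*q⁻¹)).toLinearMap ∘ₗ castL k A (mul_assoc p q q⁻¹))
        (LinearMap.id : A p⁻¹ →ₗ[k] A p⁻¹)
      = TensorProduct.map
          (TensorProduct.assoc k (A p) (A q) (A q⁻¹)).symm.toLinearMap LinearMap.id ∘ₗ
        TensorProduct.map (TensorProduct.map LinearMap.id (H.Δ q q⁻¹).toLinearMap)
          LinearMap.id ∘ₗ
        TensorProduct.map
          ((H.Δ p (q*q⁻¹)).toLinearMap ∘ₗ castL k A (mul_assoc p q q⁻¹))
          LinearMap.id := by
    rw [← TensorProduct.map_comp, ← TensorProduct.map_comp, LinearMap.comp_id,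
      LinearMap.comp_id]
  rw [e4]
  simp only [LinearMap.comp_apply]
  rw [← LinearMap.comp_apply (Θm H p q), C3map]
  simp only [LinearMap.comp_apply]
  rw [← LinearMap.comp_apply (swz _ _ _), swz_nat]
  simp only [LinearMap.comp_apply]
  rw [← LinearMap.comp_apply (TensorProduct.map (Mm H p) (Mm H q)),
    ← TensorProduct.map_comp, Mm_Δ, LinearMap.comp_id]
  have e5 := LinearMap.congr_fun (C4map H p q) t₀
  simp only [LinearMap.comp_apply] at e5
  rw [e5]
  -- final antipode + cast bookkeeping
  have e6 : TensorProduct.map (castL k A (mul_inv_cancel_right p q)) (cS H p) t₀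
      = TensorProduct.map LinearMap.id (cS H p)
          ((H.Δ p p⁻¹) (castL k A (by rw [mul_inv_cancel_right]) b)) := by
    rw [ht₀, ← Δ_castL_left H (mul_inv_cancel_right p q)
        (by rw [mul_inv_cancel_right]) b,
      ← LinearMap.comp_apply (TensorProduct.map LinearMap.id (cS H p)),
      ← TensorProduct.map_comp, LinearMap.comp_id, LinearMap.id_comp]
  rw [e6]
  rw [show cS H p = (castL k A (inv_inv p)).comp (H.S p⁻¹) from rfl]
  rw [H.antipode_right p]
  rw [map_smul, unitF_apply, hbdef, castL_castL, castL_castL]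
  simp only [LinearMap.flip_apply, TensorProduct.mk_apply]
  rw [← Algebra.TensorProduct.one_def]

end HopfGCoalgebra
end Aux4
section Aux5
set_option maxHeartbeats 1000000
set_option synthInstance.maxHeartbeats 400000
namespace HopfGCoalgebra
open TensorProduct

variable {k : Type u} [Field k] {G : Type v} [Group G]
  {A : G → Type w} [∀ p, Ring (A p)] [∀ p, Algebra k (A p)]

variable (H : HopfGCoalgebra k A)

/-- Anti-comultiplicativity of the antipode. -/
lemma T1_eq_T2 (p q : G) (a : A (q⁻¹ * p⁻¹)) : T1 H p q a = T2 H p q a := by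
  have hA : (q⁻¹ * p⁻¹) * (p * q) = 1 := by group
  have hB : (p * q) * (q⁻¹ * p⁻¹) = 1 := by group
  have mA : cnv H (T1 H p q) (H.Δ p q).toLinearMap
      = unitF H ∘ₗ castL k A hA := LinearMap.ext fun c => stepA H p q hA c
  have mB : cnv H (H.Δ p q).toLinearMap (T2 H p q)
      = unitF H ∘ₗ castL k A hB := LinearMap.ext fun c => stepB H p q hB c
  have h₂ : q⁻¹ * p⁻¹ = ((q⁻¹ * p⁻¹) * (p * q)) * (q⁻¹ * p⁻¹) := by group
  calc T1 H p q a
      = cnv H (T1 H p q) (cnv H (H.Δ p q).toLinearMap (T2 H p q))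
          (castL k A (h₂.trans (mul_assoc _ _ _)) a) := by
        rw [mB, cnv_cast_right H (T1 H p q) (unitF H) hB
            (by rw [hB]) (castL k A (h₂.trans (mul_assoc _ _ _)) a),
          cnv_unit_right, castL_castL, castL_castL]
        rfl
    _ = cnv H (cnv H (T1 H p q) (H.Δ p q).toLinearMap) (T2 H p q)
          (castL k A h₂ a) := by
        rw [cnv_assoc, castL_castL]
    _ = T2 H p q a := by
        rw [mA, cnv_cast_left H (unitF H) (T2 H p q) hA
            (by rw [hA]) (castL k A h₂ a),
          cnv_unit_left, castL_castL, castL_castL]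
        rfl

end HopfGCoalgebra
end Aux5

/-- for `f ∈ (A p)*`, `g ∈ (A q)*`, `a ∈ A (q⁻¹p⁻¹)`, `x ∈ A (pq)`,
`(f ⊗ g)(Δ_{p,q}(x · S_{q⁻¹p⁻¹}(a))) = Σ_{(a)} Σ_{(x)} f(x₍₁₎·S_{p⁻¹}(a₍₂₎)) g(x₍₂₎·S_{q⁻¹}(a₍₁₎))`. -/
theorem dmul_shift_by_antipode
    {k : Type u} [Field k] {G : Type v} [Group G]
    (A : G → Type w) [∀ p, Ring (A p)] [∀ p, Algebra k (A p)]
    [∀ p, FiniteDimensional k (A p)]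
    (H : HopfGCoalgebra k A) (p q : G)
    (f : A p →ₗ[k] k) (g : A q →ₗ[k] k)
    (a : A (q⁻¹ * p⁻¹)) (x : A (p * q))
    {ι ι' : Type} [Fintype ι] [Fintype ι']
    (a1 : ι → A q⁻¹) (a2 : ι → A p⁻¹)
    (ha : (H.Δ q⁻¹ p⁻¹) a = ∑ i : ι, a1 i ⊗ₜ[k] a2 i)
    (x1 : ι' → A p) (x2 : ι' → A q)
    (hx : (H.Δ p q) x = ∑ j : ι', x1 j ⊗ₜ[k] x2 j) :
    H.dmul f g
        (x * castL k A (by rw [mul_inv_rev, inv_inv, inv_inv]) (H.S (q⁻¹ * p⁻¹) a))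
      = ∑ i : ι, ∑ j : ι',
          f (x1 j * castL k A (inv_inv p) (H.S p⁻¹ (a2 i)))
            * g (x2 j * castL k A (inv_inv q) (H.S q⁻¹ (a1 i))) := by
  have key : (H.Δ p q)
        ((castL k A (by rw [mul_inv_rev, inv_inv, inv_inv] :
            (q⁻¹ * p⁻¹)⁻¹ = p * q)) (H.S (q⁻¹ * p⁻¹) a))
      = ∑ i : ι, (castL k A (inv_inv p)) (H.S p⁻¹ (a2 i))
          ⊗ₜ[k] (castL k A (inv_inv q)) (H.S q⁻¹ (a1 i)) := by
    have hT1 : (H.Δ p q)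
        ((castL k A (by rw [mul_inv_rev, inv_inv, inv_inv] :
            (q⁻¹ * p⁻¹)⁻¹ = p * q)) (H.S (q⁻¹ * p⁻¹) a))
        = HopfGCoalgebra.T1 H p q a := rfl
    rw [hT1, HopfGCoalgebra.T1_eq_T2]
    simp only [HopfGCoalgebra.T2, LinearMap.comp_apply, AlgHom.toLinearMap_apply,
      LinearEquiv.coe_coe]
    rw [ha]
    simp [HopfGCoalgebra.cS, TensorProduct.comm_tmul]
  show LinearMap.mul' k k (TensorProduct.map f g ((H.Δ p q) (x * _))) = _
  rw [map_mul, key, hx, Finset.sum_mul_sum]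
  simp only [Algebra.TensorProduct.tmul_mul_tmul, map_sum, TensorProduct.map_tmul,
    LinearMap.mul'_apply]
  exact Finset.sum_comm
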